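/- The number of bargraphs with exactly j H steps, exactly k U steps, and no occurrence of the factor DH equals the number of words over {U,H} of length j+k with exactly j letters H that begin with U and end with H; equivalently, the generating function of bargraphs avoiding DH, with x marking H steps and y marking U steps, is xy/(1−x−y). -/

import Mathlib

/-- Steps of bargraphs / Motzkin paths. -/
inductive Step where
  | U : Step
  | H : Step
  | D : Step
deriving DecidableEq

/-- Vertical displacement of a step. -/
def Step.val : Step → ℤ
  | .U => 1
  | .H => 0
  | .D => -1

/-- Mirror of a step (swap U and D). -/
def Step.mirror : Step → Step
  | .U => .D
  | .H => .H
  | .D => .U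

/-- Final height of a word. -/
def hgt (w : List Step) : ℤ := (w.map Step.val).sum

/-- A Motzkin path prefix: never goes below the x-axis. -/
def IsMotzkinPrefix (w : List Step) : Prop := ∀ p : List Step, p <+: w → 0 ≤ hgt p

/-- A Motzkin path: never below the x-axis, ends at height 0. -/
def IsMotzkin (w : List Step) : Prop := IsMotzkinPrefix w ∧ hgt w = 0

/-- No peak `UD` and no valley `DU`. -/
def Cornerless (w : List Step) : Prop :=
  ¬ [Step.U, Step.D] <:+: w ∧ ¬ [Step.D, Step.U] <:+: w

/-- A bargraph: starts at the origin, ends on the x-axis, stays strictly above the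
x-axis except at the endpoints, and has no factor `UD` or `DU`. -/
def IsBargraph (w : List Step) : Prop :=
  2 ≤ w.length ∧ hgt w = 0 ∧
    (∀ p : List Step, p <+: w → p ≠ [] → p ≠ w → 0 < hgt p) ∧ Cornerless w

/-- Semiperimeter: number of `U` steps plus number of `H` steps. -/
def semi (w : List Step) : ℕ := w.count Step.U + w.count Step.H

/-- Length of the initial run of `U` steps. -/
def leadU : List Step → ℕ
  | Step.U :: rest => leadU rest + 1
  | _ => 0

/-- Length of the initial run of `H` steps. -/
def leadH : List Step → ℕ
  | Step.H :: rest => leadH rest + 1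
  | _ => 0

/-- Length of the initial run of `D` steps. -/
def leadD : List Step → ℕ
  | Step.D :: rest => leadD rest + 1
  | _ => 0

/-- Length of the first maximal run of `D` steps (0 if none). -/
def firstDescLen : List Step → ℕ
  | [] => 0
  | Step.D :: rest => leadD rest + 1
  | _ :: rest => firstDescLen rest

/-- Number of occurrences of the two-letter factor `a b`. -/
def cnt2 (a b : Step) : List Step → ℕ
  | x :: y :: rest => (if x = a ∧ y = b then 1 else 0) + cnt2 a b (y :: rest)
  | _ => 0

/-- Heights of the columns (`H` steps), starting from a given height. -/
def colHeights : ℤ → List Step → List ℤ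
  | _, [] => []
  | h, Step.U :: rest => colHeights (h + 1) rest
  | h, Step.H :: rest => h :: colHeights h rest
  | h, Step.D :: rest => colHeights (h - 1) rest

/-- Width of the leftmost maximal horizontal segment (0 if none). -/
def lhsW : List Step → ℕ
  | [] => 0
  | Step.H :: rest => leadH rest + 1
  | _ :: rest => lhsW rest

/-- Delete `h` steps at the start of the leftmost horizontal segment. -/
def stripLeadH (h : ℕ) : List Step → List Step
  | [] => []
  | Step.H :: rest => List.drop h (Step.H :: rest)
  | s :: rest => s :: stripLeadH h rest

/-- Number of initial columns of height 1: largest `j` such that the word begins `U H^j`. -/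
def iuc : List Step → ℕ
  | Step.U :: rest => leadH rest
  | _ => 0

/-- Number of maximal horizontal segments. -/
def hsCount : List Step → ℕ
  | [] => 0
  | [Step.H] => 1
  | [_] => 0
  | a :: b :: rest => (if a = Step.H ∧ b ≠ Step.H then 1 else 0) + hsCount (b :: rest)

/-- Mirror image: reverse the word and swap `U` with `D`. -/
def mir (w : List Step) : List Step := (w.reverse).map Step.mirror

/-- Shape of strictly alternating bargraphs:
`U^{i₁} H D^{k₁} H U^{i₂} H D^{k₂} H ⋯ U^{iₘ} H D^{kₘ}` with all `iᵣ, kᵣ ≥ 1`. -/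
inductive SAShape : List Step → Prop where
  | base (i k : ℕ) : 1 ≤ i → 1 ≤ k →
      SAShape (List.replicate i Step.U ++ [Step.H] ++ List.replicate k Step.D)
  | cons (i k : ℕ) (w : List Step) : 1 ≤ i → 1 ≤ k → SAShape w →
      SAShape (List.replicate i Step.U ++ [Step.H] ++ List.replicate k Step.D ++ [Step.H] ++ w)

/-- A strictly alternating bargraph. -/
def IsStrictAlt (w : List Step) : Prop := IsBargraph w ∧ SAShape w

/-- A secondary structure on `{0, …, m-1}`: all consecutive edges are present, every
vertex has at most one non-consecutive neighbour, and there are no crossing edges. -/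
def IsSecondaryStructure {m : ℕ} (G : SimpleGraph (Fin m)) : Prop :=
  (∀ i j : Fin m, (i : ℕ) + 1 = (j : ℕ) → G.Adj i j) ∧
  (∀ i j k : Fin m, G.Adj i j → G.Adj i k →
      (i : ℕ) + 1 ≠ (j : ℕ) → (j : ℕ) + 1 ≠ (i : ℕ) →
      (i : ℕ) + 1 ≠ (k : ℕ) → (k : ℕ) + 1 ≠ (i : ℕ) → j = k) ∧
  ¬ ∃ i j k l : Fin m, (i : ℕ) < (j : ℕ) ∧ (j : ℕ) < (k : ℕ) ∧ (k : ℕ) < (l : ℕ) ∧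
      G.Adj i k ∧ G.Adj j l

/-- Generating function of bargraphs: `x` (variable 0) marks `H` steps,
`y` (variable 1) marks `U` steps. -/
noncomputable def BG : MvPowerSeries (Fin 2) ℚ :=
  fun d => (Nat.card {w : List Step //
    IsBargraph w ∧ w.count Step.H = d 0 ∧ w.count Step.U = d 1} : ℚ)

/-- Generating function of cornerless Motzkin paths. -/
noncomputable def MG : MvPowerSeries (Fin 2) ℚ :=
  fun d => (Nat.card {w : List Step //
    IsMotzkin w ∧ Cornerless w ∧ w.count Step.H = d 0 ∧ w.count Step.U = d 1} : ℚ)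

/-- Generating function of bargraphs avoiding the factor `DH`. -/
noncomputable def BDH : MvPowerSeries (Fin 2) ℚ :=
  fun d => (Nat.card {w : List Step //
    IsBargraph w ∧ ¬ [Step.D, Step.H] <:+: w ∧
      w.count Step.H = d 0 ∧ w.count Step.U = d 1} : ℚ)

/-- Generating function of bargraphs avoiding the factors `DH` and `HH`. -/
noncomputable def BDHHH : MvPowerSeries (Fin 2) ℚ :=
  fun d => (Nat.card {w : List Step //
    IsBargraph w ∧ ¬ [Step.D, Step.H] <:+: w ∧ ¬ [Step.H, Step.H] <:+: w ∧
      w.count Step.H = d 0 ∧ w.count Step.U = d 1} : ℚ)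

/-- Generating function of cornerless Motzkin path prefixes ending at height `h`. -/
noncomputable def Pgf (h : ℕ) : MvPowerSeries (Fin 2) ℚ :=
  fun d => (Nat.card {w : List Step //
    IsMotzkinPrefix w ∧ Cornerless w ∧ hgt w = (h : ℤ) ∧
      w.count Step.H = d 0 ∧ w.count Step.U = d 1} : ℚ)

/-- Decomposition `G = U^a G₁ H G₂ D^a` of a strictly alternating bargraph. -/
def SADecomp (t : ℕ × List Step × List Step) (G : List Step) : Prop :=
  1 ≤ t.1 ∧ IsStrictAlt t.2.1 ∧ IsStrictAlt (Step.U :: (t.2.2 ++ [Step.D])) ∧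
    G = List.replicate t.1 Step.U ++ t.2.1 ++ [Step.H] ++ t.2.2 ++
      List.replicate t.1 Step.D

/-!
A bargraph avoiding `DH` never climbs again after its first descent: since `DU` and `DH` are
both excluded, it is a word `p` over `{U, H}` followed by one run of `D`s. The first column forces
`p` to begin with `U`, and the absence of a peak `UD` forces it to end with `H`. Deleting the final
descent is therefore a bijection onto the `{U, H}`-words that begin with `U` and end with `H`.
Writing such a word as `U x H`, and splitting the arbitrary `{U, H}`-words `x` by their first
letter, their generating function `W` satisfies `W = 1 + x W + y W`, and the bargraphs have
generating function `x y W = x y / (1 - x - y)`.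
-/

namespace List

variable {α : Type*} {R : α → α → Prop} {l l₁ l₂ q : List α} {a b : α}

theorem not_infix_pair_of_isChain (h : l.IsChain R) (hab : ¬ R a b) : ¬ [a, b] <:+: l :=
  fun hi => hab (isChain_pair.1 (h.infix hi))

theorem eq_replicate_of_isChain (h : l.IsChain (fun x y => x = a → y = a))
    (hhead : ∀ x ∈ l.head?, x = a) : l = replicate l.length a :=
  eq_replicate_iff.2 ⟨rfl, h.induction _ _ (fun _ _ hxy hx => hxy hx)
    (fun hne => hhead _ (by simp [head?_eq_some_head hne]))⟩

theorem prefix_append_iff_exists :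
    q <+: l₁ ++ l₂ ↔ q <+: l₁ ∨ ∃ r, r <+: l₂ ∧ q = l₁ ++ r := by
  constructor
  · rintro ⟨t, ht⟩
    rcases append_eq_append_iff.1 ht with ⟨s, rfl, -⟩ | ⟨r, rfl, rfl⟩
    · exact Or.inl (prefix_append _ _)
    · exact Or.inr ⟨r, prefix_append _ _, rfl⟩
  · rintro (h | ⟨r, hr, rfl⟩)
    · exact prefix_append_of_prefix h
    · exact (prefix_append_right_inj l₁).2 hr

end List

open List MvPowerSeries

instance : Fintype Step :=
  ⟨{Step.U, Step.H, Step.D}, fun s => by cases s <;> simp⟩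

@[simp] lemma hgt_nil : hgt [] = 0 := rfl

@[simp] lemma hgt_cons (s : Step) (w : List Step) : hgt (s :: w) = s.val + hgt w := by
  simp [hgt]

@[simp] lemma hgt_append (v w : List Step) : hgt (v ++ w) = hgt v + hgt w := by
  simp [hgt]

@[simp] lemma hgt_replicate_D (n : ℕ) : hgt (replicate n Step.D) = -n := by
  simp [hgt, Step.val]

lemma forall_mem_U_or_H_iff {w : List Step} :
    (∀ s ∈ w, s = Step.U ∨ s = Step.H) ↔ Step.D ∉ w :=
  ⟨fun h hD => by simpa using h _ hD, fun h s hs => by cases s <;> simp_all⟩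

lemma hgt_eq_count_U {w : List Step} (hw : Step.D ∉ w) : hgt w = w.count Step.U := by
  induction w with
  | nil => rfl
  | cons s w ih =>
    simp only [mem_cons, not_or] at hw
    cases s <;> simp_all [Step.val, add_comm]

lemma length_eq_count_H_add_count_U {w : List Step} (hw : Step.D ∉ w) :
    w.length = w.count Step.H + w.count Step.U := by
  induction w with
  | nil => rfl
  | cons s w ih =>
    simp only [mem_cons, not_or] at hw
    cases s <;> simp_all <;> omega

lemma count_append_replicate_D {p : List Step} {s : Step} (hs : s ≠ Step.D) (n : ℕ) :
    (p ++ replicate n Step.D).count s = p.count s := by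
  simp [count_replicate, Ne.symm hs]

lemma IsBargraph.head?_eq_U {w : List Step} (hw : IsBargraph w) : w.head? = some Step.U := by
  obtain ⟨hlen, -, hpos, -⟩ := hw
  obtain ⟨x, y, t, rfl⟩ : ∃ x y t, w = x :: y :: t := by
    match w, hlen with
    | x :: y :: t, _ => exact ⟨x, y, t, rfl⟩
  have hx : 0 < hgt [x] := hpos [x] (by simp) (by simp) (by simp)
  cases x <;> simp_all [Step.val]

lemma isChain_D_imp_D {w : List Step} (hDU : ¬ [Step.D, Step.U] <:+: w)
    (hDH : ¬ [Step.D, Step.H] <:+: w) : w.IsChain (fun x y => x = Step.D → y = Step.D) :=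
  (isChain_isInfix w).imp fun x y hxy hx => by
    subst hx
    cases y <;> simp_all

lemma exists_eq_append_replicate_D {w : List Step} (hDU : ¬ [Step.D, Step.U] <:+: w)
    (hDH : ¬ [Step.D, Step.H] <:+: w) :
    ∃ p m, Step.D ∉ p ∧ w = p ++ replicate m Step.D := by
  refine ⟨w.takeWhile (· != Step.D), (w.dropWhile (· != Step.D)).length,
    fun h => by simpa using mem_takeWhile_imp h, ?_⟩
  conv_lhs => rw [← takeWhile_append_dropWhile (p := (· != Step.D)) (l := w)]
  congr 1
  refine eq_replicate_of_isChain ((isChain_D_imp_D hDU hDH).suffix (dropWhile_suffix _)) ?_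
  intro x hx
  have := head?_dropWhile_not (· != Step.D) w
  rw [hx] at this
  simpa using this

lemma IsBargraph.exists_eq_append_replicate_count_U {w : List Step} (hw : IsBargraph w)
    (hDH : ¬ [Step.D, Step.H] <:+: w) :
    ∃ p, Step.D ∉ p ∧ p.head? = some Step.U ∧ p.getLast? = some Step.H ∧
      w = p ++ replicate (p.count Step.U) Step.D := by
  have hwU := hw.head?_eq_U
  obtain ⟨-, hhgt, -, hUD, hDU⟩ := hw
  obtain ⟨p, m, hD, rfl⟩ := exists_eq_append_replicate_D hDU hDH
  obtain rfl : m = p.count Step.U := by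
    rw [hgt_append, hgt_eq_count_U hD, hgt_replicate_D] at hhgt
    omega
  have hp : p ≠ [] := by
    rintro rfl
    simp at hwU
  have hpU : p.head? = some Step.U := by rwa [head?_append_of_ne_nil _ hp] at hwU
  refine ⟨p, hD, hpU, ?_, rfl⟩
  obtain ⟨p', x, rfl⟩ := (eq_nil_or_concat' p).resolve_left hp
  have hk : 0 < (p' ++ [x]).count Step.U := count_pos_iff.2 (mem_of_mem_head? hpU)
  obtain ⟨n, hn⟩ := Nat.exists_eq_add_one_of_ne_zero hk.ne'
  cases x
  · refine absurd ⟨p', replicate n Step.D, ?_⟩ hUD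
    simp [hn, replicate_succ]
  · simp
  · simp at hD

lemma isBargraph_append_replicate {p : List Step} (hD : Step.D ∉ p)
    (hU : p.head? = some Step.U) (hH : p.getLast? = some Step.H) :
    IsBargraph (p ++ replicate (p.count Step.U) Step.D) ∧
      ¬ [Step.D, Step.H] <:+: p ++ replicate (p.count Step.U) Step.D := by
  set k := p.count Step.U
  have hUp : Step.U ∈ p := mem_of_mem_head? hU
  have hk : 0 < k := count_pos_iff.2 hUp
  -- a single relation that excludes the factors `UD`, `DU` and `DH` at once
  have hchain : (p ++ replicate k Step.D).IsChain
      (fun x y => (y = Step.D → x ≠ Step.U) ∧ (x = Step.D → y = Step.D)) := by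
    refine isChain_append.2 ⟨?_, isChain_replicate_of_rel _ (by simp), ?_⟩
    · exact (isChain_isInfix p).imp_of_mem_imp fun x y hx hy _ =>
        ⟨fun h => (hD (h ▸ hy)).elim, fun h => (hD (h ▸ hx)).elim⟩
    · intro x hx y _
      rw [hH, Option.mem_some_iff] at hx
      simp [← hx]
  refine ⟨⟨?_, ?_, ?_, not_infix_pair_of_isChain hchain (by simp),
    not_infix_pair_of_isChain hchain (by simp)⟩, not_infix_pair_of_isChain hchain (by simp)⟩
  · have : 0 < p.length := length_pos_of_mem hUp
    simp only [length_append, length_replicate]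
    omega
  · simp [hgt_eq_count_U hD, k]
  · intro q hq hne hlt
    rcases prefix_append_iff_exists.1 hq with hqp | ⟨r, hr, rfl⟩
    · have hqU : q.head? = some Step.U := by
        obtain ⟨t, rfl⟩ := hqp
        rwa [head?_append_of_ne_nil _ hne] at hU
      rw [hgt_eq_count_U fun h => hD (hqp.subset h)]
      exact_mod_cast count_pos_iff.2 (mem_of_mem_head? hqU)
    · obtain ⟨hrk, hr⟩ := prefix_replicate_iff.1 hr
      have : r.length ≠ k := fun h => hlt (by rw [hr, h])
      rw [hgt_append, hgt_eq_count_U hD, hr, hgt_replicate_D]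
      omega

lemma injOn_append_replicate_count_U :
    Set.InjOn (fun p => p ++ replicate (p.count Step.U) Step.D) {p | Step.D ∉ p} := by
  intro p hp p' hp' h
  have hfilter : ∀ q : List Step, Step.D ∉ q →
      (q ++ replicate (q.count Step.U) Step.D).filter (· != Step.D) = q := fun q hq => by
    simp only [filter_append, filter_replicate, bne_self_eq_false, Bool.false_eq_true,
      ite_false, append_nil]
    exact filter_eq_self.2 fun a ha => by simpa using ne_of_mem_of_not_mem ha hq
  rw [← hfilter p hp, ← hfilter p' hp']
  exact congrArg _ h

lemma setOf_bargraph_not_DH_eq_image (j k : ℕ) :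
    {w : List Step | IsBargraph w ∧ ¬ [Step.D, Step.H] <:+: w ∧
        w.count Step.H = j ∧ w.count Step.U = k}
      = (fun p => p ++ replicate (p.count Step.U) Step.D) ''
        {w : List Step | (∀ s ∈ w, s = Step.U ∨ s = Step.H) ∧
          w.length = j + k ∧ w.count Step.H = j ∧
          w.head? = some Step.U ∧ w.getLast? = some Step.H} := by
  have hH : Step.H ≠ Step.D := by decide
  have hU : Step.U ≠ Step.D := by decide
  ext w
  constructor
  · rintro ⟨hw, hDH, hj, hk⟩
    obtain ⟨p, hD, hpU, hpH, rfl⟩ := hw.exists_eq_append_replicate_count_U hDH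
    rw [count_append_replicate_D hH] at hj
    rw [count_append_replicate_D hU] at hk
    exact ⟨p, ⟨forall_mem_U_or_H_iff.2 hD, by rw [length_eq_count_H_add_count_U hD, hj, hk],
      hj, hpU, hpH⟩, rfl⟩
  · rintro ⟨p, ⟨hUH, hlen, hj, hpU, hpH⟩, rfl⟩
    have hD := forall_mem_U_or_H_iff.1 hUH
    obtain ⟨hw, hDH⟩ := isBargraph_append_replicate hD hpU hpH
    refine ⟨hw, hDH, by rw [count_append_replicate_D hH, hj], ?_⟩
    rw [count_append_replicate_D hU]
    rw [length_eq_count_H_add_count_U hD] at hlen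
    omega

theorem card_bargraph_not_DH_eq (j k : ℕ) :
    Nat.card {w : List Step // IsBargraph w ∧ ¬ [Step.D, Step.H] <:+: w ∧
        w.count Step.H = j ∧ w.count Step.U = k}
      = Nat.card {w : List Step // (∀ s ∈ w, s = Step.U ∨ s = Step.H) ∧
          w.length = j + k ∧ w.count Step.H = j ∧
          w.head? = some Step.U ∧ w.getLast? = some Step.H} :=
  (Nat.card_congr (Equiv.setCongr (setOf_bargraph_not_DH_eq_image j k))).trans
    (Nat.card_image_of_injOn (injOn_append_replicate_count_U.mono
      fun _ hp => forall_mem_U_or_H_iff.1 hp.1))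

noncomputable def bidegree (w : List Step) : Fin 2 →₀ ℕ :=
  Finsupp.single 0 (w.count Step.H) + Finsupp.single 1 (w.count Step.U)

lemma bidegree_eq_iff {w : List Step} {d : Fin 2 →₀ ℕ} :
    bidegree w = d ↔ w.count Step.H = d 0 ∧ w.count Step.U = d 1 := by
  constructor
  · rintro rfl
    simp [bidegree]
  · rintro ⟨h0, h1⟩
    ext i
    fin_cases i <;> simp [bidegree, h0, h1]

@[simp] lemma bidegree_nil : bidegree [] = 0 := by
  simp [bidegree]

@[simp] lemma bidegree_append (v w : List Step) :
    bidegree (v ++ w) = bidegree v + bidegree w := by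
  simp only [bidegree, count_append, Finsupp.single_add]
  abel

@[simp] lemma bidegree_cons_H (w : List Step) :
    bidegree (Step.H :: w) = bidegree w + Finsupp.single 0 1 := by
  simp only [bidegree, count_cons_self, count_cons_of_ne (by decide : Step.H ≠ Step.U),
    Finsupp.single_add]
  abel

@[simp] lemma bidegree_cons_U (w : List Step) :
    bidegree (Step.U :: w) = bidegree w + Finsupp.single 1 1 := by
  simp only [bidegree, count_cons_self, count_cons_of_ne (by decide : Step.U ≠ Step.H),
    Finsupp.single_add]
  abel

lemma finite_setOf_bidegree_add_eq (c d : Fin 2 →₀ ℕ) :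
    {w : List Step | Step.D ∉ w ∧ bidegree w + c = d}.Finite := by
  refine (List.finite_length_le Step (d 0 + d 1)).subset fun w ⟨hD, hw⟩ => ?_
  have hle : bidegree w ≤ d := hw ▸ le_self_add
  have h0 := Finsupp.le_def.1 hle 0
  have h1 := Finsupp.le_def.1 hle 1
  simp [bidegree] at h0 h1
  simp only [Set.mem_ofPred_eq, length_eq_count_H_add_count_U hD]
  omega

noncomputable def uhWordGF : MvPowerSeries (Fin 2) ℚ :=
  fun d => ({w : List Step | Step.D ∉ w ∧ bidegree w = d}.ncard : ℚ)

lemma coeff_monomial_mul_uhWordGF (c d : Fin 2 →₀ ℕ) :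
    coeff d (monomial c 1 * uhWordGF) =
      ({w : List Step | Step.D ∉ w ∧ bidegree w + c = d}.ncard : ℚ) := by
  rw [coeff_monomial_mul, one_mul]
  split_ifs with hc
  · simp_rw [← eq_tsub_iff_add_eq_of_le hc]
    rfl
  · have hempty : {w : List Step | Step.D ∉ w ∧ bidegree w + c = d} = ∅ :=
      Set.eq_empty_of_forall_notMem fun w hw => hc (hw.2 ▸ le_add_self)
    rw [hempty, Set.ncard_empty, Nat.cast_zero]

lemma setOf_bidegree_eq_union (d : Fin 2 →₀ ℕ) :
    {w : List Step | Step.D ∉ w ∧ bidegree w = d} =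
      {w | w = [] ∧ d = 0} ∪
        (cons Step.H '' {w | Step.D ∉ w ∧ bidegree w + Finsupp.single 0 1 = d} ∪
          cons Step.U '' {w | Step.D ∉ w ∧ bidegree w + Finsupp.single 1 1 = d}) := by
  ext w
  rcases w with _ | ⟨s, w⟩
  · simp [eq_comm]
  · cases s <;> simp

lemma uhWordGF_eq : uhWordGF = 1 + X 0 * uhWordGF + X 1 * uhWordGF := by
  ext d
  rw [add_assoc, map_add, map_add, X_def, X_def, coeff_monomial_mul_uhWordGF,
    coeff_monomial_mul_uhWordGF, coeff_one, coeff_apply uhWordGF]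
  have hnil : ({w : List Step | w = [] ∧ d = 0}.ncard : ℚ) = if d = 0 then 1 else 0 := by
    split_ifs with hd <;> simp [hd]
  have hdisj_nil : Disjoint {w : List Step | w = [] ∧ d = 0}
      (cons Step.H '' {w | Step.D ∉ w ∧ bidegree w + Finsupp.single 0 1 = d} ∪
        cons Step.U '' {w | Step.D ∉ w ∧ bidegree w + Finsupp.single 1 1 = d}) :=
    Set.disjoint_left.2 fun w ⟨hw, _⟩ hw' => by
      rcases hw' with ⟨v, _, rfl⟩ | ⟨v, _, rfl⟩ <;> simp at hw
  have hdisj_HU : Disjoint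
      (cons Step.H '' {w | Step.D ∉ w ∧ bidegree w + Finsupp.single 0 1 = d})
      (cons Step.U '' {w | Step.D ∉ w ∧ bidegree w + Finsupp.single 1 1 = d}) :=
    Set.disjoint_left.2 fun w ⟨v, _, hv⟩ ⟨v', _, hv'⟩ => by simp [← hv] at hv'
  have hfin := finite_setOf_bidegree_add_eq
  rw [uhWordGF, setOf_bidegree_eq_union, Set.ncard_union_eq hdisj_nil
      ((Set.finite_singleton []).subset fun w hw => hw.1)
      (((hfin _ d).image _).union ((hfin _ d).image _)),
    Set.ncard_union_eq hdisj_HU ((hfin _ d).image _) ((hfin _ d).image _),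
    Set.ncard_image_of_injective _ cons_injective, Set.ncard_image_of_injective _ cons_injective]
  push_cast
  rw [hnil]

lemma setOf_U_H_word_eq_image (d : Fin 2 →₀ ℕ) :
    {w : List Step | (∀ s ∈ w, s = Step.U ∨ s = Step.H) ∧ w.length = d 0 + d 1 ∧
        w.count Step.H = d 0 ∧ w.head? = some Step.U ∧ w.getLast? = some Step.H} =
      (fun x => Step.U :: (x ++ [Step.H])) ''
        {x | Step.D ∉ x ∧ bidegree x + (Finsupp.single 0 1 + Finsupp.single 1 1) = d} := by
  have hdeg : ∀ x, bidegree (Step.U :: (x ++ [Step.H])) =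
      bidegree x + (Finsupp.single 0 1 + Finsupp.single 1 1) := fun x => by
    rw [bidegree_cons_U, bidegree_append, ← singleton_append, bidegree_append, bidegree_cons_H,
      bidegree_nil]
    abel
  ext w
  simp only [Set.mem_ofPred_eq, Set.mem_image, forall_mem_U_or_H_iff]
  constructor
  · rintro ⟨hD, hlen, hH, hhead, hlast⟩
    obtain ⟨t, rfl⟩ : ∃ t, w = Step.U :: t := by
      rcases w with _ | ⟨s, t⟩
      · simp at hhead
      · exact ⟨t, by simpa using hhead⟩
    obtain ⟨x, rfl⟩ : ∃ x, t = x ++ [Step.H] := by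
      rcases eq_nil_or_concat' t with rfl | ⟨x, b, rfl⟩
      · simp at hlast
      · rw [← cons_append, getLast?_concat, Option.some_inj] at hlast
        exact ⟨x, by rw [hlast]⟩
    refine ⟨x, ⟨fun h => hD (by simp [h]), ?_⟩, rfl⟩
    rw [← hdeg, bidegree_eq_iff]
    rw [length_eq_count_H_add_count_U hD] at hlen
    exact ⟨hH, by omega⟩
  · rintro ⟨x, ⟨hD, hx⟩, rfl⟩
    rw [← hdeg, bidegree_eq_iff] at hx
    have hwD : Step.D ∉ Step.U :: (x ++ [Step.H]) := by simp [hD]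
    refine ⟨hwD, ?_, hx.1, rfl, by rw [← cons_append, getLast?_concat]⟩
    rw [length_eq_count_H_add_count_U hwD, hx.1, hx.2]

lemma BDH_eq_X_mul_X_mul_uhWordGF : BDH = X 0 * X 1 * uhWordGF := by
  ext d
  have hinj : Function.Injective fun x : List Step => Step.U :: (x ++ [Step.H]) :=
    fun x y h => append_cancel_right (cons_injective h)
  rw [X_def, X_def, monomial_mul_monomial, one_mul, coeff_monomial_mul_uhWordGF,
    ← Set.ncard_image_of_injective _ hinj, ← setOf_U_H_word_eq_image, ← Nat.card_coe_set_eq,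
    coeff_apply, BDH]
  exact congrArg _ (card_bargraph_not_DH_eq _ _)

/-- bargraphs avoiding `DH` with `j` `H`s and `k` `U`s are
equinumerous with words over `{U,H}` of length `j + k` with `j` letters `H` that
begin with `U` and end with `H`; equivalently, their generating function is
`xy/(1 − x − y)`. -/
theorem nondecreasing_bargraphs :
    (∀ j k : ℕ,
      Nat.card {w : List Step // IsBargraph w ∧ ¬ [Step.D, Step.H] <:+: w ∧
          w.count Step.H = j ∧ w.count Step.U = k}
        = Nat.card {w : List Step // (∀ s ∈ w, s = Step.U ∨ s = Step.H) ∧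
            w.length = j + k ∧ w.count Step.H = j ∧
            w.head? = some Step.U ∧ w.getLast? = some Step.H}) ∧
    (1 - MvPowerSeries.X (0 : Fin 2) - MvPowerSeries.X (1 : Fin 2)) * BDH
      = MvPowerSeries.X (0 : Fin 2) * MvPowerSeries.X (1 : Fin 2) := by
  refine ⟨card_bargraph_not_DH_eq, ?_⟩
  rw [BDH_eq_X_mul_X_mul_uhWordGF]
  linear_combination (X 0 * X 1 : MvPowerSeries (Fin 2) ℚ) * uhWordGF_eq
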